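/- Define $F_s, G_s \in \underline{\mathbb{R}}^{n\times p}$ from max-plus features and the empirical Bellman operator, and $H_s \in \underline{\mathbb{R}}^{n\times q}$ from test functions by $[H_s]_{i,k} = [h]_k(z_i)$. Set $F_s^H = H_s^\top \boxtimes F_s$ and $G_s^H = H_s^\top \boxtimes G_s$. If $\bar\theta \in \mathbb{R}^p$ solves $F_s^H \boxtimes \theta = G_s^H \boxtimes (\gamma\theta)$, then $Q_{\bar\theta}(z) = \max_j([f]_j(z) + [\bar\theta]_j)$ satisfies the empirical variational Bellman equation: $\max_{i \in [1:n]}\{[h]_k(z_i) + Q_{\bar\theta}(z_i)\} = \max_{i \in [1:n]}\{[h]_k(z_i) + \mathbf{B}_s Q_{\bar\theta}(z_i)\}$ for every $k \in [1:q]$. -/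

import Mathlib

/-!
Max-plus matrix products are associative, so the two sides of the equation for `θ̄` are
`Hₛᵀ ⊠ (Fₛ ⊠ θ̄)` and `Hₛᵀ ⊠ (Gₛ ⊠ γθ̄)`. The vector `Fₛ ⊠ θ̄` lists the values of `Q_θ̄` at the
samples, and `Gₛ ⊠ γθ̄` those of `𝐁ₛ Q_θ̄`: for `γ ≥ 0` the empirical Bellman operator commutes
with maxima and turns a shift by `θ̄ⱼ` into a shift by `γ θ̄ⱼ`.
-/

open Finset

def mpMulVec {m n : ℕ} (A : Fin m → Fin n → WithBot ℝ) (v : Fin n → WithBot ℝ) :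
    Fin m → WithBot ℝ :=
  fun i => univ.sup fun j => A i j + v j

def mpMul {m n p : ℕ} (A : Fin m → Fin n → WithBot ℝ) (B : Fin n → Fin p → WithBot ℝ) :
    Fin m → Fin p → WithBot ℝ :=
  fun i k => univ.sup fun j => A i j + B j k

def empBellman {X U : Type*} [Fintype U] {N : ℕ} (r : Fin N → ℝ) (γ : ℝ)
    (xp : Fin N → X) (g : X × U → WithBot ℝ) : Fin N → WithBot ℝ :=
  fun i => (r i : WithBot ℝ) + (univ.sup fun u => g (xp i, u)).map (γ * ·)

namespace WithBot

variable {ι α : Type*} [LinearOrder α]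

theorem map_finset_sup {β : Type*} [LinearOrder β] {φ : α → β} (hφ : Monotone φ)
    (s : Finset ι) (g : ι → WithBot α) :
    (s.sup g).map φ = s.sup fun i => (g i).map φ :=
  apply_sup_eq_sup_comp_of_linearOrder (WithBot.map φ) hφ.withBot_map rfl

variable [Add α]

theorem add_finset_sup [AddLeftMono α] (s : Finset ι) (g : ι → WithBot α) (a : WithBot α) :
    a + s.sup g = s.sup fun i => a + g i :=
  apply_sup_eq_sup_comp_of_linearOrder (a + ·) add_right_mono (add_bot a)

theorem finset_sup_add [AddRightMono α] (s : Finset ι) (g : ι → WithBot α) (a : WithBot α) :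
    s.sup g + a = s.sup fun i => g i + a :=
  apply_sup_eq_sup_comp_of_linearOrder (· + a) add_left_mono (bot_add a)

end WithBot

theorem mpMulVec_mpMul {m n p : ℕ} (A : Fin m → Fin n → WithBot ℝ)
    (B : Fin n → Fin p → WithBot ℝ) (v : Fin p → WithBot ℝ) :
    mpMulVec (mpMul A B) v = mpMulVec A (mpMulVec B v) := by
  funext i
  simp only [mpMulVec, mpMul, WithBot.finset_sup_add, WithBot.add_finset_sup, add_assoc]
  exact Finset.sup_comm _ _ _

theorem empBellman_finset_sup_add {X U ι : Type*} [Fintype U] {N : ℕ} (r : Fin N → ℝ) {γ : ℝ}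
    (hγ : 0 ≤ γ) (xp : Fin N → X) (s : Finset ι) (g : ι → X × U → WithBot ℝ) (c : ι → ℝ)
    (i : Fin N) :
    empBellman r γ xp (fun w => s.sup fun j => g j w + c j) i =
      s.sup fun j => empBellman r γ xp (g j) i + ((γ * c j : ℝ) : WithBot ℝ) := by
  have hmul : Monotone (γ * ·) := fun _ _ h => mul_le_mul_of_nonneg_left h hγ
  have hmap_add (x : WithBot ℝ) (j : ι) :
      (x + c j).map (γ * ·) = x.map (γ * ·) + ((γ * c j : ℝ) : WithBot ℝ) :=
    WithBot.map_add (AddMonoidHom.mulLeft γ) x (c j)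
  simp only [empBellman]
  rw [Finset.sup_comm]
  simp only [← WithBot.finset_sup_add]
  rw [WithBot.map_finset_sup hmul, WithBot.add_finset_sup]
  simp only [hmap_add, add_assoc]

theorem mp_empirical_variational_bellman_general {X U : Type*} [Fintype U]
    {n p q : ℕ} (γ : ℝ) (hγ : 0 < γ ∧ γ < 1)
    (z : Fin n → X × U) (xp : Fin n → X) (r : Fin n → ℝ)
    (f : Fin p → X × U → WithBot ℝ) (h : Fin q → X × U → WithBot ℝ)
    (Fs Gs : Fin n → Fin p → WithBot ℝ) (Hs : Fin n → Fin q → WithBot ℝ)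
    (hFs : ∀ i j, Fs i j = f j (z i))
    (hGs : ∀ i j, Gs i j = empBellman r γ xp (f j) i)
    (hHs : ∀ i k, Hs i k = h k (z i))
    (θbar : Fin p → ℝ)
    (hθ : mpMulVec (mpMul (fun k i => Hs i k) Fs) (fun j => ((θbar j : ℝ) : WithBot ℝ)) =
          mpMulVec (mpMul (fun k i => Hs i k) Gs) (fun j => ((γ * θbar j : ℝ) : WithBot ℝ))) :
    ∀ k, (univ.sup fun i => h k (z i) +
            (univ.sup fun j => f j (z i) + (θbar j : WithBot ℝ))) =
         (univ.sup fun i => h k (z i) +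
            empBellman r γ xp (fun w => univ.sup fun j => f j w + (θbar j : WithBot ℝ)) i) := by
  intro k
  have hQ : ∀ i, (univ.sup fun j => f j (z i) + (θbar j : WithBot ℝ)) =
      mpMulVec Fs (fun j => ((θbar j : ℝ) : WithBot ℝ)) i := by
    simp [mpMulVec, hFs]
  have hBQ : ∀ i, empBellman r γ xp (fun w => univ.sup fun j => f j w + (θbar j : WithBot ℝ)) i =
      mpMulVec Gs (fun j => ((γ * θbar j : ℝ) : WithBot ℝ)) i := by
    simp [empBellman_finset_sup_add r hγ.1.le, mpMulVec, hGs]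
  calc _ = mpMulVec (fun k i => Hs i k) (mpMulVec Fs fun j => ((θbar j : ℝ) : WithBot ℝ)) k := by
        simp only [hQ, mpMulVec, hHs]
    _ = mpMulVec (fun k i => Hs i k) (mpMulVec Gs fun j => ((γ * θbar j : ℝ) : WithBot ℝ)) k := by
        rw [← mpMulVec_mpMul, hθ, mpMulVec_mpMul]
    _ = _ := by simp only [hBQ, mpMulVec, hHs]

/-- if `θ̄` solves `Fₛᴴ ⊠ θ = Gₛᴴ ⊠ (γθ)` with `Fₛᴴ = Hₛᵀ ⊠ Fₛ` and
`Gₛᴴ = Hₛᵀ ⊠ Gₛ`, then `Q_θ̄` solves the empirical variational Bellman equation. -/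
theorem mp_empirical_variational_bellman {X U : Type*} [Fintype U] [Nonempty U]
    {n p q : ℕ} (γ : ℝ) (hγ : 0 < γ ∧ γ < 1)
    (z : Fin n → X × U) (xp : Fin n → X) (r : Fin n → ℝ)
    (f : Fin p → X × U → WithBot ℝ) (h : Fin q → X × U → WithBot ℝ)
    (Fs Gs : Fin n → Fin p → WithBot ℝ) (Hs : Fin n → Fin q → WithBot ℝ)
    (hFs : ∀ i j, Fs i j = f j (z i))
    (hGs : ∀ i j, Gs i j = empBellman r γ xp (f j) i)
    (hHs : ∀ i k, Hs i k = h k (z i))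
    (θbar : Fin p → ℝ)
    (hθ : mpMulVec (mpMul (fun k i => Hs i k) Fs) (fun j => ((θbar j : ℝ) : WithBot ℝ)) =
          mpMulVec (mpMul (fun k i => Hs i k) Gs) (fun j => ((γ * θbar j : ℝ) : WithBot ℝ))) :
    ∀ k, (univ.sup fun i => h k (z i) +
            (univ.sup fun j => f j (z i) + (θbar j : WithBot ℝ))) =
         (univ.sup fun i => h k (z i) +
            empBellman r γ xp (fun w => univ.sup fun j => f j w + (θbar j : WithBot ℝ)) i) :=
  mp_empirical_variational_bellman_general γ hγ z xp r f h Fs Gs Hs hFs hGs hHs θbar hθ
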